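/- arXiv:2509.19015 — 2 statements merged into one kernel-verified Lean document; each statement's English description precedes it below -/
import Mathlib

section
/- There is a constant C > 0 such that for all smooth compactly supported functions f, g, h on ℝ³, ∫_{ℝ³} |f g h| dx ≤ C ‖f‖_{L²}^{1/2} ‖∂₁f‖_{L²}^{1/2} ‖g‖_{L²}^{1/2} ‖∂₂g‖_{L²}^{1/2} ‖h‖_{L²}^{1/2} ‖∂₃h‖_{L²}^{1/2}. -/
open MeasureTheory

noncomputable section

/-- Euclidean 3-space. -/
abbrev E3 := EuclideanSpace ℝ (Fin 3)

/-- Partial derivative in the `j`-th coordinate direction on `ℝ³`. -/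
def pd (j : Fin 3) (f : E3 → ℝ) : E3 → ℝ :=
  fun x => fderiv ℝ f x (EuclideanSpace.single j 1)

/-- The `L²` norm on `ℝ³`. -/
def L2 (f : E3 → ℝ) : ℝ := (∫ x : E3, (f x) ^ 2) ^ ((1:ℝ)/2)

open Finset Function ENNReal

abbrev X3 := Fin 3 → ℝ

def eL : X3 ≃L[ℝ] E3 := (PiLp.continuousLinearEquiv 2 ℝ (fun _ : Fin 3 => ℝ)).symm


-- Cauchy-Schwarz, product form
lemma lintegral_CS {α : Type*} [MeasurableSpace α] (ν : Measure α) (u v : α → ℝ≥0∞)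
    (hu : Measurable u) (hv : Measurable v) :
    ∫⁻ a, u a * v a ∂ν ≤ (∫⁻ a, u a ^ (2:ℝ) ∂ν) ^ ((1:ℝ)/2) * (∫⁻ a, v a ^ (2:ℝ) ∂ν) ^ ((1:ℝ)/2) := by
  have := ENNReal.lintegral_mul_le_Lp_mul_Lq ν (p := 2) (q := 2) ⟨by norm_num, by norm_num, by norm_num⟩
    hu.aemeasurable hv.aemeasurable
  simpa using this

lemma lintegral_CS_sqrt {α : Type*} [MeasurableSpace α] (ν : Measure α) (u v : α → ℝ≥0∞)
    (hu : Measurable u) (hv : Measurable v) :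
    ∫⁻ a, (u a * v a) ^ ((1:ℝ)/2) ∂ν ≤
      (∫⁻ a, u a ∂ν) ^ ((1:ℝ)/2) * (∫⁻ a, v a ∂ν) ^ ((1:ℝ)/2) := by
  have h := lintegral_CS ν (fun a => u a ^ ((1:ℝ)/2)) (fun a => v a ^ ((1:ℝ)/2))
    (hu.pow_const _) (hv.pow_const _)
  simp only [← ENNReal.rpow_natCast, ← ENNReal.rpow_mul] at h ⊢
  norm_num at h
  calc ∫⁻ a, (u a * v a) ^ ((1:ℝ)/2) ∂ν
      = ∫⁻ a, u a ^ ((1:ℝ)/2) * v a ^ ((1:ℝ)/2) ∂ν := by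
        simp_rw [ENNReal.mul_rpow_of_nonneg _ _ (by norm_num : (0:ℝ) ≤ 1/2)]
    _ ≤ _ := by simpa using h


lemma peel {i : Fin 3} (P Q R : X3 → ℝ≥0∞) (hQ : Measurable Q) (hR : Measurable R)
    (hP : ∀ x t, P (update x i t) = P x) (x : X3) :
    ∫⁻ t, (P (update x i t) * Q (update x i t) * R (update x i t)) ^ ((1:ℝ)/2)
      ≤ (P x * (∫⁻ t, Q (update x i t)) * (∫⁻ t, R (update x i t))) ^ ((1:ℝ)/2) := by
  have h12 : (0:ℝ) ≤ 1/2 := by norm_num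
  calc ∫⁻ t, (P (update x i t) * Q (update x i t) * R (update x i t)) ^ ((1:ℝ)/2)
      = ∫⁻ t, P x ^ ((1:ℝ)/2) * (Q (update x i t) * R (update x i t)) ^ ((1:ℝ)/2) := by
        refine lintegral_congr fun t => ?_
        rw [hP, mul_assoc, ENNReal.mul_rpow_of_nonneg _ _ h12]
    _ = P x ^ ((1:ℝ)/2) * ∫⁻ t, (Q (update x i t) * R (update x i t)) ^ ((1:ℝ)/2) := by
        exact lintegral_const_mul _ (((hQ.comp (measurable_update x)).mul
          (hR.comp (measurable_update x))).pow_const _)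
    _ ≤ P x ^ ((1:ℝ)/2) * ((∫⁻ t, Q (update x i t)) ^ ((1:ℝ)/2) *
          (∫⁻ t, R (update x i t)) ^ ((1:ℝ)/2)) := by
        refine mul_le_mul_right ?_ _
        exact lintegral_CS_sqrt _ _ _ (hQ.comp (measurable_update x)) (hR.comp (measurable_update x))
    _ = _ := by
        rw [← ENNReal.mul_rpow_of_nonneg _ _ h12, ← ENNReal.mul_rpow_of_nonneg _ _ h12,
          mul_assoc]
lemma loomis_whitney (φ₀ φ₁ φ₂ : X3 → ℝ≥0∞)
    (h₀ : Measurable φ₀) (h₁ : Measurable φ₁) (h₂ : Measurable φ₂) :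
    ∫⁻ x, ((∫⋯∫⁻_{0}, φ₀) x * (∫⋯∫⁻_{1}, φ₁) x * (∫⋯∫⁻_{2}, φ₂) x) ^ ((1:ℝ)/2)
      ≤ ((∫⁻ x, φ₀ x) * (∫⁻ x, φ₁ x) * (∫⁻ x, φ₂ x)) ^ ((1:ℝ)/2) := by
  classical
  set A : X3 → ℝ≥0∞ := ∫⋯∫⁻_{0}, φ₀ with hA_def
  set B : X3 → ℝ≥0∞ := ∫⋯∫⁻_{1}, φ₁ with hB_def
  set C : X3 → ℝ≥0∞ := ∫⋯∫⁻_{2}, φ₂ with hC_def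
  set A1 : X3 → ℝ≥0∞ := ∫⋯∫⁻_{0,1}, φ₀ with hA1_def
  set B1 : X3 → ℝ≥0∞ := ∫⋯∫⁻_{0,1}, φ₁ with hB1_def
  set C1 : X3 → ℝ≥0∞ := ∫⋯∫⁻_{0,2}, φ₂ with hC1_def
  set A2 : X3 → ℝ≥0∞ := ∫⋯∫⁻_Finset.univ, φ₀ with hA2_def
  set B2 : X3 → ℝ≥0∞ := ∫⋯∫⁻_Finset.univ, φ₁ with hB2_def
  set C2 : X3 → ℝ≥0∞ := ∫⋯∫⁻_Finset.univ, φ₂ with hC2_def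
  have hA : Measurable A := h₀.lmarginal _
  have hB : Measurable B := h₁.lmarginal _
  have hC : Measurable C := h₂.lmarginal _
  have hA1 : Measurable A1 := h₀.lmarginal _
  have hB1 : Measurable B1 := h₁.lmarginal _
  have hC1 : Measurable C1 := h₂.lmarginal _
  have hA2 : Measurable A2 := h₀.lmarginal _
  have hB2 : Measurable B2 := h₁.lmarginal _
  have hg : Measurable (fun x => (A x * B x * C x) ^ ((1:ℝ)/2)) :=
    ((hA.mul hB).mul hC).pow_const _
  have hg1 : Measurable (fun x => (A x * B1 x * C1 x) ^ ((1:ℝ)/2)) :=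
    ((hA.mul hB1).mul hC1).pow_const _
  -- marginal-composition identities
  have hBm : ∀ x : X3, (∫⁻ t, B (update x 0 t)) = B1 x := by
    intro x
    have : (∫⋯∫⁻_({0} : Finset (Fin 3)), B) x = B1 x := by
      rw [hB_def, ← lmarginal_union (fun _ => (volume : Measure ℝ)) φ₁ h₁ (by decide)]
      rfl
    rw [← this, lmarginal_singleton]
  have hCm : ∀ x : X3, (∫⁻ t, C (update x 0 t)) = C1 x := by
    intro x
    have : (∫⋯∫⁻_({0} : Finset (Fin 3)), C) x = C1 x := by
      rw [hC_def, ← lmarginal_union (fun _ => (volume : Measure ℝ)) φ₂ h₂ (by decide)]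
      rfl
    rw [← this, lmarginal_singleton]
  have hAm : ∀ x : X3, (∫⁻ t, A (update x 1 t)) = A1 x := by
    intro x
    have : (∫⋯∫⁻_({1} : Finset (Fin 3)), A) x = A1 x := by
      rw [hA_def, ← lmarginal_union' (fun _ => (volume : Measure ℝ)) φ₀ h₀
        (s := {0}) (t := {1}) (by decide)]
      rfl
    rw [← this, lmarginal_singleton]
  have hC1m : ∀ x : X3, (∫⁻ t, C1 (update x 1 t)) = C2 x := by
    intro x
    have : (∫⋯∫⁻_({1} : Finset (Fin 3)), C1) x = C2 x := by
      rw [hC1_def, ← lmarginal_union' (fun _ => (volume : Measure ℝ)) φ₂ h₂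
        (s := {0,2}) (t := {1}) (by decide)]
      have : ({0,2} ∪ {1} : Finset (Fin 3)) = Finset.univ := by decide
      rw [this, hC2_def]
    rw [← this, lmarginal_singleton]
  have hA1m : ∀ x : X3, (∫⁻ t, A1 (update x 2 t)) = A2 x := by
    intro x
    have : (∫⋯∫⁻_({2} : Finset (Fin 3)), A1) x = A2 x := by
      rw [hA1_def, ← lmarginal_union' (fun _ => (volume : Measure ℝ)) φ₀ h₀
        (s := {0,1}) (t := {2}) (by decide)]
      have : ({0,1} ∪ {2} : Finset (Fin 3)) = Finset.univ := by decide
      rw [this, hA2_def]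
    rw [← this, lmarginal_singleton]
  have hB1m : ∀ x : X3, (∫⁻ t, B1 (update x 2 t)) = B2 x := by
    intro x
    have : (∫⋯∫⁻_({2} : Finset (Fin 3)), B1) x = B2 x := by
      rw [hB1_def, ← lmarginal_union' (fun _ => (volume : Measure ℝ)) φ₁ h₁
        (s := {0,1}) (t := {2}) (by decide)]
      have : ({0,1} ∪ {2} : Finset (Fin 3)) = Finset.univ := by decide
      rw [this, hB2_def]
    rw [← this, lmarginal_singleton]
  set pt : X3 := fun _ => 0 with hpt
  have huniv : (Finset.univ : Finset (Fin 3)) = insert 0 (insert 1 {2}) := by decide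
  calc ∫⁻ x, (A x * B x * C x) ^ ((1:ℝ)/2)
      = (∫⋯∫⁻_insert 0 (insert 1 {2}), fun x => (A x * B x * C x) ^ ((1:ℝ)/2)) pt := by
        rw [← huniv, lmarginal_univ]
        simp [MeasureTheory.volume_pi]
    _ = (∫⋯∫⁻_insert 1 {2},
          fun x => ∫⁻ t, (A (update x 0 t) * B (update x 0 t) * C (update x 0 t)) ^ ((1:ℝ)/2)) pt := by
        rw [lmarginal_insert' _ hg (by decide)]
    _ ≤ (∫⋯∫⁻_insert 1 {2}, fun x => (A x * B1 x * C1 x) ^ ((1:ℝ)/2)) pt := by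
        refine lmarginal_mono (fun x => ?_) pt
        have := peel (i := 0) A B C hB hC
          (fun x t => lmarginal_update_of_mem (s := {0}) (fun _ => (volume : Measure ℝ)) (by decide) φ₀ x t) x
        rw [hBm x, hCm x] at this
        exact this
    _ = (∫⋯∫⁻_{2},
          fun x => ∫⁻ t, (A (update x 1 t) * B1 (update x 1 t) * C1 (update x 1 t)) ^ ((1:ℝ)/2)) pt := by
        rw [lmarginal_insert' _ hg1 (by decide)]
    _ ≤ (∫⋯∫⁻_{2}, fun x => (A1 x * B1 x * C2 x) ^ ((1:ℝ)/2)) pt := by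
        refine lmarginal_mono (fun x => ?_) pt
        have heq : ∀ t : ℝ, A (update x 1 t) * B1 (update x 1 t) * C1 (update x 1 t)
            = B1 (update x 1 t) * A (update x 1 t) * C1 (update x 1 t) := by
          intro t; ring
        calc ∫⁻ t, (A (update x 1 t) * B1 (update x 1 t) * C1 (update x 1 t)) ^ ((1:ℝ)/2)
            = ∫⁻ t, (B1 (update x 1 t) * A (update x 1 t) * C1 (update x 1 t)) ^ ((1:ℝ)/2) := by
              exact lintegral_congr fun t => by rw [heq t]
          _ ≤ (B1 x * (∫⁻ t, A (update x 1 t)) * (∫⁻ t, C1 (update x 1 t))) ^ ((1:ℝ)/2) :=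
              peel (i := 1) B1 A C1 hA hC1
                (fun x t => lmarginal_update_of_mem (s := {0,1}) (fun _ => (volume : Measure ℝ)) (by decide) φ₁ x t) x
          _ = (A1 x * B1 x * C2 x) ^ ((1:ℝ)/2) := by
              rw [hAm x, hC1m x]; ring_nf
    _ = ∫⁻ t, (A1 (update pt 2 t) * B1 (update pt 2 t) * C2 (update pt 2 t)) ^ ((1:ℝ)/2) := by
        rw [lmarginal_singleton]
    _ ≤ (C2 pt * (∫⁻ t, A1 (update pt 2 t)) * (∫⁻ t, B1 (update pt 2 t))) ^ ((1:ℝ)/2) := by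
        have heq : ∀ t : ℝ, A1 (update pt 2 t) * B1 (update pt 2 t) * C2 (update pt 2 t)
            = C2 (update pt 2 t) * A1 (update pt 2 t) * B1 (update pt 2 t) := by
          intro t; ring
        calc ∫⁻ t, (A1 (update pt 2 t) * B1 (update pt 2 t) * C2 (update pt 2 t)) ^ ((1:ℝ)/2)
            = ∫⁻ t, (C2 (update pt 2 t) * A1 (update pt 2 t) * B1 (update pt 2 t)) ^ ((1:ℝ)/2) := by
              exact lintegral_congr fun t => by rw [heq t]
          _ ≤ _ := peel (i := 2) C2 A1 B1 hA1 hB1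
              (fun x t => lmarginal_update_of_mem (fun _ => (volume : Measure ℝ)) (Finset.mem_univ _) φ₂ x t) pt
    _ = ((∫⁻ x, φ₀ x) * (∫⁻ x, φ₁ x) * (∫⁻ x, φ₂ x)) ^ ((1:ℝ)/2) := by
        rw [hA1m pt, hB1m pt]
        rw [hA2_def, hB2_def, hC2_def]
        simp only [lmarginal_univ, ← MeasureTheory.volume_pi]
        congr 1
        ring
lemma pd_continuous {f : E3 → ℝ} (hf : ContDiff ℝ (⊤ : ℕ∞) f) (j : Fin 3) : Continuous (pd j f) :=
  (hf.continuous_fderiv (by simp)).clm_apply continuous_const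

lemma pd_compactSupport {f : E3 → ℝ} (hs : HasCompactSupport f) (j : Fin 3) :
    HasCompactSupport (pd j f) := by
  have h1 : HasCompactSupport (fderiv ℝ f) := hs.fderiv (𝕜 := ℝ)
  exact h1.comp_left (g := fun L : E3 →L[ℝ] ℝ => L (EuclideanSpace.single j 1)) (by simp)

lemma line_isometry (j : Fin 3) (x : X3) :
    Isometry (fun t : ℝ => eL (update x j t)) := by
  refine Isometry.of_dist_eq fun a b => ?_
  have : ∀ t : ℝ, ∀ i, (eL (update x j t) : E3) i = update x j t i := fun _ _ => rfl
  rw [EuclideanSpace.dist_eq]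
  rw [Finset.sum_eq_single j]
  · simp [this, Real.sqrt_sq dist_nonneg]
  · intro i _ hij
    simp [this, update_of_ne hij]
  · simp

lemma ftc_line {f : E3 → ℝ} (hf : ContDiff ℝ (⊤ : ℕ∞) f) (hsupp : HasCompactSupport f)
    (j : Fin 3) (x : X3) :
    ENNReal.ofReal |f (eL x)| ^ (2:ℝ) ≤
      ∫⁻ t : ℝ, ENNReal.ofReal (2 * |f (eL (update x j t))| * |pd j f (eL (update x j t))|) := by
  set u : ℝ → E3 := fun t => eL (update x j t) with hu_def
  -- derivative of the line map
  have hbase : ∀ t : ℝ, HasDerivAt (fun s : ℝ => update x j s) (Pi.single j 1) t := by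
    intro t
    have heq : (fun s : ℝ => update x j s) = fun s : ℝ => update x j 0 + s • (Pi.single j 1 : X3) := by
      funext s i
      by_cases hij : i = j
      · subst hij
        simp [Pi.single_apply]
      · simp [update_of_ne hij, Pi.single_apply, hij]
    rw [heq]
    simpa using ((hasDerivAt_id t).smul_const (Pi.single j 1 : X3)).const_add (update x j 0)
  have hu : ∀ t : ℝ, HasDerivAt u (EuclideanSpace.single j 1) t := by
    intro t
    have := (eL : X3 →L[ℝ] E3).hasFDerivAt.comp_hasDerivAt t (hbase t)
    have hv : (eL : X3 →L[ℝ] E3) (Pi.single j 1) = EuclideanSpace.single j 1 := by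
      ext i
      simp [eL, Pi.single_apply, EuclideanSpace.single_apply]
    exact this.congr_deriv hv
  have hdf : Differentiable ℝ f := hf.differentiable (by simp)
  set φ : ℝ → ℝ := fun t => f (u t) with hφ_def
  set φd : ℝ → ℝ := fun t => pd j f (u t) with hφd_def
  have hφd : ∀ t : ℝ, HasDerivAt φ (φd t) t := by
    intro t
    exact (hdf (u t)).hasFDerivAt.comp_hasDerivAt t (hu t)
  have hφcont : Continuous φ := continuous_iff_continuousAt.2 fun t => (hφd t).continuousAt
  have hφdcont : Continuous φd :=
    (pd_continuous hf j).comp (continuous_iff_continuousAt.2 fun t => (hu t).continuousAt)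
  have hφsupp : HasCompactSupport φ :=
    hsupp.comp_isClosedEmbedding (line_isometry j x).isClosedEmbedding
  set d : ℝ → ℝ := fun t => 2 * |φ t| * |φd t| with hd_def
  have hdcont : Continuous d := (continuous_const.mul hφcont.abs).mul hφdcont.abs
  have hdsupp : HasCompactSupport d := by
    refine hφsupp.mono ?_
    intro t ht
    simp only [Function.mem_support, hd_def] at ht ⊢
    intro h0
    apply ht
    show 2 * |φ t| * |φd t| = 0
    rw [h0]; simp
  have hdint : Integrable d := hdcont.integrable_of_hasCompactSupport hdsupp
  have hdnn : ∀ t, 0 ≤ d t := fun t => by positivity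
  -- pick a starting point below the support
  obtain ⟨M, hM⟩ := hφsupp.isCompact.isBounded.subset_closedBall 0
  set s : ℝ := x j with hs_def
  set a : ℝ := min s (-(|M| + 1)) with ha_def
  have has : a ≤ s := min_le_left _ _
  have hφa : φ a = 0 := by
    apply image_eq_zero_of_notMem_tsupport
    intro hmem
    have := hM hmem
    simp only [Metric.mem_closedBall, Real.dist_eq, sub_zero] at this
    have h1 : a ≤ -(|M| + 1) := min_le_right _ _
    have h2 := (abs_le.mp this).1
    have h3 : M ≤ |M| := le_abs_self M
    linarith
  have hψ : ∀ t : ℝ, HasDerivAt (fun t => φ t ^ 2) (2 * φ t * φd t) t := by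
    intro t
    refine ((hφd t).fun_pow 2).congr_deriv ?_
    push_cast
    ring
  have hftc : ∫ t in a..s, (2 * φ t * φd t) = φ s ^ 2 - φ a ^ 2 :=
    intervalIntegral.integral_eq_sub_of_hasDerivAt (fun t _ => hψ t)
      ((continuous_const.mul hφcont |>.mul hφdcont).intervalIntegrable a s)
  have hkey : φ s ^ 2 ≤ ∫ t, d t := by
    have h1 : φ s ^ 2 = ∫ t in a..s, (2 * φ t * φd t) := by
      rw [hftc, hφa]; ring
    have h2 : ∫ t in a..s, (2 * φ t * φd t) ≤ ∫ t in a..s, d t := by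
      apply intervalIntegral.integral_mono_on has
        ((continuous_const.mul hφcont |>.mul hφdcont).intervalIntegrable a s)
        (hdcont.intervalIntegrable a s)
      intro t _
      calc 2 * φ t * φd t ≤ |2 * φ t * φd t| := le_abs_self _
        _ = d t := by rw [hd_def]; simp [abs_mul, mul_assoc]
    have h3 : ∫ t in a..s, d t ≤ ∫ t, d t := by
      rw [intervalIntegral.integral_of_le has]
      exact integral_mono_measure Measure.restrict_le_self
        (Filter.Eventually.of_forall hdnn) hdint
    linarith
  -- pass to ENNReal
  have hux : u s = eL x := by rw [hu_def]; simp [hs_def]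
  calc ENNReal.ofReal |f (eL x)| ^ (2:ℝ)
      = ENNReal.ofReal (φ s ^ 2) := by
        rw [← hux, ENNReal.ofReal_rpow_of_nonneg (abs_nonneg _) (by norm_num : (0:ℝ) ≤ 2)]
        congr 1
        rw [show ((2:ℝ)) = ((2:ℕ):ℝ) by norm_num, Real.rpow_natCast, sq_abs]
    _ ≤ ENNReal.ofReal (∫ t, d t) := ENNReal.ofReal_le_ofReal hkey
    _ = ∫⁻ t, ENNReal.ofReal (d t) :=
        ofReal_integral_eq_lintegral_ofReal hdint (Filter.Eventually.of_forall hdnn)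
    _ = _ := rfl



lemma mp_eL : MeasurePreserving (fun y : X3 => eL y) volume volume :=
  (EuclideanSpace.volume_preserving_symm_measurableEquiv_toLp (Fin 3)).symm

lemma sq_integrable {u : E3 → ℝ} (hc : Continuous u) (hs : HasCompactSupport u) :
    Integrable (fun z : E3 => u z ^ 2) := by
  have hsupp2 : HasCompactSupport (fun z : E3 => u z ^ 2) := by
    refine hs.mono ?_
    intro z hz
    simp only [Function.mem_support] at hz ⊢
    intro h0; exact hz (by simp [h0])
  exact (hc.pow 2).integrable_of_hasCompactSupport hsupp2

-- bound on ∫⁻ 2|u||∂u|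
lemma dE_bound {u : E3 → ℝ} (hc : Continuous u) (hs : HasCompactSupport u)
    (hsm : ContDiff ℝ (⊤ : ℕ∞) u) (j : Fin 3) :
    ∫⁻ z : E3, ENNReal.ofReal (2 * |u z| * |pd j u z|) ≤
      2 * (ENNReal.ofReal (∫ z : E3, u z ^ 2)) ^ ((1:ℝ)/2) *
        (ENNReal.ofReal (∫ z : E3, pd j u z ^ 2)) ^ ((1:ℝ)/2) := by
  have hpc : Continuous (pd j u) := pd_continuous hsm j
  have h12 : (0:ℝ) ≤ 2 := by norm_num
  have step1 : ∀ z : E3, ENNReal.ofReal (2 * |u z| * |pd j u z|)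
      = 2 * (ENNReal.ofReal |u z| * ENNReal.ofReal |pd j u z|) := by
    intro z
    rw [ENNReal.ofReal_mul (by positivity), ENNReal.ofReal_mul (by positivity)]
    simp [mul_assoc]
  calc ∫⁻ z : E3, ENNReal.ofReal (2 * |u z| * |pd j u z|)
      = ∫⁻ z : E3, 2 * (ENNReal.ofReal |u z| * ENNReal.ofReal |pd j u z|) :=
        lintegral_congr step1
    _ = 2 * ∫⁻ z : E3, ENNReal.ofReal |u z| * ENNReal.ofReal |pd j u z| :=
        lintegral_const_mul _ ((hc.abs.measurable.ennreal_ofReal).mul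
          (hpc.abs.measurable.ennreal_ofReal))
    _ ≤ 2 * ((∫⁻ z : E3, ENNReal.ofReal |u z| ^ (2:ℝ)) ^ ((1:ℝ)/2) *
          (∫⁻ z : E3, ENNReal.ofReal |pd j u z| ^ (2:ℝ)) ^ ((1:ℝ)/2)) := by
        refine mul_le_mul_right ?_ _
        exact lintegral_CS _ _ _ (hc.abs.measurable.ennreal_ofReal)
          (hpc.abs.measurable.ennreal_ofReal)
    _ = _ := by
        have habs : ∀ v : E3 → ℝ, (fun z => ENNReal.ofReal |v z| ^ (2:ℝ))
            = fun z => ENNReal.ofReal (v z ^ 2) := by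
          intro v; funext z
          rw [ENNReal.ofReal_rpow_of_nonneg (abs_nonneg _) h12]
          congr 1
          rw [show ((2:ℝ)) = ((2:ℕ):ℝ) by norm_num, Real.rpow_natCast, sq_abs]
        rw [habs u, habs (pd j u)]
        rw [← ofReal_integral_eq_lintegral_ofReal (sq_integrable hc hs)
          (Filter.Eventually.of_forall fun z => sq_nonneg _)]
        rw [← ofReal_integral_eq_lintegral_ofReal (sq_integrable hpc (pd_compactSupport hs j))
          (Filter.Eventually.of_forall fun z => sq_nonneg _)]
        rw [mul_assoc]

/-- Anisotropic triple product estimate on `ℝ³`. -/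
theorem triple_product_1 :
    ∃ C : ℝ, 0 < C ∧ ∀ f g h : E3 → ℝ,
      ContDiff ℝ (⊤ : ℕ∞) f → HasCompactSupport f →
      ContDiff ℝ (⊤ : ℕ∞) g → HasCompactSupport g →
      ContDiff ℝ (⊤ : ℕ∞) h → HasCompactSupport h →
      (∫ x : E3, |f x * g x * h x|) ≤
        C * L2 f ^ ((1:ℝ)/2) * L2 (pd 0 f) ^ ((1:ℝ)/2) *
          L2 g ^ ((1:ℝ)/2) * L2 (pd 1 g) ^ ((1:ℝ)/2) *
          L2 h ^ ((1:ℝ)/2) * L2 (pd 2 h) ^ ((1:ℝ)/2) := by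
  refine ⟨3, by norm_num, ?_⟩
  intro f g h hf hfs hg hgs hh hhs
  have he : (0:ℝ) ≤ 1/2 := by norm_num
  have hfc := hf.continuous
  have hgc := hg.continuous
  have hhc := hh.continuous
  -- E3-side integrands
  set dE0 : E3 → ℝ≥0∞ := fun z => ENNReal.ofReal (2 * |f z| * |pd 0 f z|) with hdE0_def
  set dE1 : E3 → ℝ≥0∞ := fun z => ENNReal.ofReal (2 * |g z| * |pd 1 g z|) with hdE1_def
  set dE2 : E3 → ℝ≥0∞ := fun z => ENNReal.ofReal (2 * |h z| * |pd 2 h z|) with hdE2_def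
  have hdE0m : Measurable dE0 := ((continuous_const.mul hfc.abs).mul
    (pd_continuous hf 0).abs).measurable.ennreal_ofReal
  have hdE1m : Measurable dE1 := ((continuous_const.mul hgc.abs).mul
    (pd_continuous hg 1).abs).measurable.ennreal_ofReal
  have hdE2m : Measurable dE2 := ((continuous_const.mul hhc.abs).mul
    (pd_continuous hh 2).abs).measurable.ennreal_ofReal
  -- X3-side integrands
  set d0 : X3 → ℝ≥0∞ := fun y => dE0 (eL y) with hd0_def
  set d1 : X3 → ℝ≥0∞ := fun y => dE1 (eL y) with hd1_def
  set d2 : X3 → ℝ≥0∞ := fun y => dE2 (eL y) with hd2_def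
  have hd0m : Measurable d0 := hdE0m.comp eL.continuous.measurable
  have hd1m : Measurable d1 := hdE1m.comp eL.continuous.measurable
  have hd2m : Measurable d2 := hdE2m.comp eL.continuous.measurable
  set A : X3 → ℝ≥0∞ := ∫⋯∫⁻_{0}, d0 with hA_def
  set B : X3 → ℝ≥0∞ := ∫⋯∫⁻_{1}, d1 with hB_def
  set C : X3 → ℝ≥0∞ := ∫⋯∫⁻_{2}, d2 with hC_def
  -- pointwise bound
  have hpoint : ∀ y : X3, ENNReal.ofReal |f (eL y) * g (eL y) * h (eL y)|
      ≤ (A y * B y * C y) ^ ((1:ℝ)/2) := by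
    intro y
    have hone : ∀ a : ℝ≥0∞, (a ^ (2:ℝ)) ^ ((1:ℝ)/2) = a := by
      intro a
      rw [← ENNReal.rpow_mul]
      norm_num
    have h1 : ENNReal.ofReal |f (eL y)| ≤ A y ^ ((1:ℝ)/2) := by
      rw [← hone (ENNReal.ofReal |f (eL y)|)]
      refine ENNReal.rpow_le_rpow ?_ he
      have := ftc_line hf hfs 0 y
      rw [hA_def, lmarginal_singleton]
      exact this
    have h2 : ENNReal.ofReal |g (eL y)| ≤ B y ^ ((1:ℝ)/2) := by
      rw [← hone (ENNReal.ofReal |g (eL y)|)]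
      refine ENNReal.rpow_le_rpow ?_ he
      have := ftc_line hg hgs 1 y
      rw [hB_def, lmarginal_singleton]
      exact this
    have h3 : ENNReal.ofReal |h (eL y)| ≤ C y ^ ((1:ℝ)/2) := by
      rw [← hone (ENNReal.ofReal |h (eL y)|)]
      refine ENNReal.rpow_le_rpow ?_ he
      have := ftc_line hh hhs 2 y
      rw [hC_def, lmarginal_singleton]
      exact this
    calc ENNReal.ofReal |f (eL y) * g (eL y) * h (eL y)|
        = ENNReal.ofReal |f (eL y)| * ENNReal.ofReal |g (eL y)| * ENNReal.ofReal |h (eL y)| := by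
          rw [abs_mul, abs_mul, ENNReal.ofReal_mul (by positivity), ENNReal.ofReal_mul (abs_nonneg _)]
      _ ≤ A y ^ ((1:ℝ)/2) * B y ^ ((1:ℝ)/2) * C y ^ ((1:ℝ)/2) :=
          mul_le_mul' (mul_le_mul' h1 h2) h3
      _ = (A y * B y * C y) ^ ((1:ℝ)/2) := by
          rw [ENNReal.mul_rpow_of_nonneg _ _ he, ENNReal.mul_rpow_of_nonneg _ _ he]
  -- main lintegral bound
  have hFm : Measurable (fun z : E3 => ENNReal.ofReal |f z * g z * h z|) :=
    ((hfc.mul hgc).mul hhc).abs.measurable.ennreal_ofReal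
  have main : ∫⁻ z : E3, ENNReal.ofReal |f z * g z * h z|
      ≤ ((∫⁻ z : E3, dE0 z) * (∫⁻ z : E3, dE1 z) * (∫⁻ z : E3, dE2 z)) ^ ((1:ℝ)/2) := by
    calc ∫⁻ z : E3, ENNReal.ofReal |f z * g z * h z|
        = ∫⁻ y : X3, ENNReal.ofReal |f (eL y) * g (eL y) * h (eL y)| :=
          (mp_eL.lintegral_comp hFm).symm
      _ ≤ ∫⁻ y : X3, (A y * B y * C y) ^ ((1:ℝ)/2) := lintegral_mono hpoint
      _ ≤ ((∫⁻ y : X3, d0 y) * (∫⁻ y : X3, d1 y) * (∫⁻ y : X3, d2 y)) ^ ((1:ℝ)/2) :=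
          loomis_whitney d0 d1 d2 hd0m hd1m hd2m
      _ = _ := by
          rw [mp_eL.lintegral_comp hdE0m, mp_eL.lintegral_comp hdE1m, mp_eL.lintegral_comp hdE2m]
  -- bounds for the three marginal integrals
  set p0 : ℝ≥0∞ := ENNReal.ofReal (∫ z : E3, f z ^ 2) with hp0_def
  set q0 : ℝ≥0∞ := ENNReal.ofReal (∫ z : E3, pd 0 f z ^ 2) with hq0_def
  set p1 : ℝ≥0∞ := ENNReal.ofReal (∫ z : E3, g z ^ 2) with hp1_def
  set q1 : ℝ≥0∞ := ENNReal.ofReal (∫ z : E3, pd 1 g z ^ 2) with hq1_def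
  set p2 : ℝ≥0∞ := ENNReal.ofReal (∫ z : E3, h z ^ 2) with hp2_def
  set q2 : ℝ≥0∞ := ENNReal.ofReal (∫ z : E3, pd 2 h z ^ 2) with hq2_def
  have b0 : ∫⁻ z : E3, dE0 z ≤ 2 * p0 ^ ((1:ℝ)/2) * q0 ^ ((1:ℝ)/2) := dE_bound hfc hfs hf 0
  have b1 : ∫⁻ z : E3, dE1 z ≤ 2 * p1 ^ ((1:ℝ)/2) * q1 ^ ((1:ℝ)/2) := dE_bound hgc hgs hg 1
  have b2 : ∫⁻ z : E3, dE2 z ≤ 2 * p2 ^ ((1:ℝ)/2) * q2 ^ ((1:ℝ)/2) := dE_bound hhc hhs hh 2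
  have main2 : ∫⁻ z : E3, ENNReal.ofReal |f z * g z * h z|
      ≤ ((2 * p0 ^ ((1:ℝ)/2) * q0 ^ ((1:ℝ)/2)) * (2 * p1 ^ ((1:ℝ)/2) * q1 ^ ((1:ℝ)/2)) *
          (2 * p2 ^ ((1:ℝ)/2) * q2 ^ ((1:ℝ)/2))) ^ ((1:ℝ)/2) :=
    main.trans (ENNReal.rpow_le_rpow (mul_le_mul' (mul_le_mul' b0 b1) b2) he)
  -- algebra
  set X : ℝ≥0∞ := (p0 ^ ((1:ℝ)/2)) ^ ((1:ℝ)/2) * (q0 ^ ((1:ℝ)/2)) ^ ((1:ℝ)/2) *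
      (p1 ^ ((1:ℝ)/2)) ^ ((1:ℝ)/2) * (q1 ^ ((1:ℝ)/2)) ^ ((1:ℝ)/2) *
      (p2 ^ ((1:ℝ)/2)) ^ ((1:ℝ)/2) * (q2 ^ ((1:ℝ)/2)) ^ ((1:ℝ)/2) with hX_def
  have halg : ((2 * p0 ^ ((1:ℝ)/2) * q0 ^ ((1:ℝ)/2)) * (2 * p1 ^ ((1:ℝ)/2) * q1 ^ ((1:ℝ)/2)) *
      (2 * p2 ^ ((1:ℝ)/2) * q2 ^ ((1:ℝ)/2))) ^ ((1:ℝ)/2) = (8:ℝ≥0∞) ^ ((1:ℝ)/2) * X := by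
    have hsplit : ∀ a b : ℝ≥0∞, (a * b) ^ ((1:ℝ)/2) = a ^ ((1:ℝ)/2) * b ^ ((1:ℝ)/2) :=
      fun a b => ENNReal.mul_rpow_of_nonneg _ _ he
    have hre : ((2 * p0 ^ ((1:ℝ)/2) * q0 ^ ((1:ℝ)/2)) * (2 * p1 ^ ((1:ℝ)/2) * q1 ^ ((1:ℝ)/2)) *
        (2 * p2 ^ ((1:ℝ)/2) * q2 ^ ((1:ℝ)/2)))
        = (8:ℝ≥0∞) * (p0 ^ ((1:ℝ)/2) * q0 ^ ((1:ℝ)/2) * p1 ^ ((1:ℝ)/2) * q1 ^ ((1:ℝ)/2) *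
            p2 ^ ((1:ℝ)/2) * q2 ^ ((1:ℝ)/2)) := by ring
    rw [hre, hsplit, hsplit, hsplit, hsplit, hsplit, hsplit, hX_def]
  have h8 : (8:ℝ≥0∞) ^ ((1:ℝ)/2) ≤ ENNReal.ofReal 3 := by
    have h89 : (8:ℝ≥0∞) ≤ 9 := by norm_num
    have h9 : (9:ℝ≥0∞) ^ ((1:ℝ)/2) = 3 := by
      rw [show (9:ℝ≥0∞) = 3 ^ (2:ℕ) by norm_num, ← ENNReal.rpow_natCast, ← ENNReal.rpow_mul]
      norm_num
    calc (8:ℝ≥0∞) ^ ((1:ℝ)/2) ≤ (9:ℝ≥0∞) ^ ((1:ℝ)/2) := ENNReal.rpow_le_rpow h89 he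
      _ = 3 := h9
      _ = ENNReal.ofReal 3 := by rw [ENNReal.ofReal_ofNat]
  -- identify the RHS
  have hL2nn : ∀ u : E3 → ℝ, 0 ≤ L2 u :=
    fun u => Real.rpow_nonneg (integral_nonneg fun z => sq_nonneg _) _
  have hL2eq : ∀ u : E3 → ℝ, ENNReal.ofReal (L2 u ^ ((1:ℝ)/2))
      = (ENNReal.ofReal (∫ z : E3, u z ^ 2) ^ ((1:ℝ)/2)) ^ ((1:ℝ)/2) := by
    intro u
    rw [ENNReal.ofReal_rpow_of_nonneg (integral_nonneg fun z => sq_nonneg _) he,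
      show ((∫ z : E3, u z ^ 2) ^ ((1:ℝ)/2)) = L2 u from rfl,
      ENNReal.ofReal_rpow_of_nonneg (hL2nn u) he]
  have hofRHS : ENNReal.ofReal (3 * L2 f ^ ((1:ℝ)/2) * L2 (pd 0 f) ^ ((1:ℝ)/2) *
        L2 g ^ ((1:ℝ)/2) * L2 (pd 1 g) ^ ((1:ℝ)/2) * L2 h ^ ((1:ℝ)/2) * L2 (pd 2 h) ^ ((1:ℝ)/2))
      = ENNReal.ofReal 3 * X := by
    have hnn : ∀ u : E3 → ℝ, 0 ≤ L2 u ^ ((1:ℝ)/2) := fun u => Real.rpow_nonneg (hL2nn u) _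
    have h3nn : (0:ℝ) ≤ 3 := by norm_num
    rw [ENNReal.ofReal_mul (mul_nonneg (mul_nonneg (mul_nonneg (mul_nonneg (mul_nonneg h3nn
        (hnn f)) (hnn (pd 0 f))) (hnn g)) (hnn (pd 1 g))) (hnn h)),
      ENNReal.ofReal_mul (mul_nonneg (mul_nonneg (mul_nonneg (mul_nonneg h3nn (hnn f))
        (hnn (pd 0 f))) (hnn g)) (hnn (pd 1 g))),
      ENNReal.ofReal_mul (mul_nonneg (mul_nonneg (mul_nonneg h3nn (hnn f)) (hnn (pd 0 f))) (hnn g)),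
      ENNReal.ofReal_mul (mul_nonneg (mul_nonneg h3nn (hnn f)) (hnn (pd 0 f))),
      ENNReal.ofReal_mul (mul_nonneg h3nn (hnn f)),
      ENNReal.ofReal_mul h3nn]
    rw [hL2eq f, hL2eq (pd 0 f), hL2eq g, hL2eq (pd 1 g), hL2eq h, hL2eq (pd 2 h)]
    rw [hX_def, hp0_def, hq0_def, hp1_def, hq1_def, hp2_def, hq2_def]
    ring
  -- final ENNReal bound
  have hle : ∫⁻ z : E3, ENNReal.ofReal |f z * g z * h z|
      ≤ ENNReal.ofReal (3 * L2 f ^ ((1:ℝ)/2) * L2 (pd 0 f) ^ ((1:ℝ)/2) *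
          L2 g ^ ((1:ℝ)/2) * L2 (pd 1 g) ^ ((1:ℝ)/2) * L2 h ^ ((1:ℝ)/2) *
          L2 (pd 2 h) ^ ((1:ℝ)/2)) := by
    rw [hofRHS]
    calc ∫⁻ z : E3, ENNReal.ofReal |f z * g z * h z|
        ≤ ((2 * p0 ^ ((1:ℝ)/2) * q0 ^ ((1:ℝ)/2)) * (2 * p1 ^ ((1:ℝ)/2) * q1 ^ ((1:ℝ)/2)) *
            (2 * p2 ^ ((1:ℝ)/2) * q2 ^ ((1:ℝ)/2))) ^ ((1:ℝ)/2) := main2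
      _ = (8:ℝ≥0∞) ^ ((1:ℝ)/2) * X := halg
      _ ≤ ENNReal.ofReal 3 * X := mul_le_mul_left h8 X
  -- conclude
  have habsint : Integrable (fun z : E3 => |f z * g z * h z|) := by
    have hsupp : HasCompactSupport (fun z : E3 => |f z * g z * h z|) := by
      refine hfs.mono ?_
      intro z hz
      simp only [Function.mem_support] at hz ⊢
      intro h0; exact hz (by simp [h0])
    exact (((hfc.mul hgc).mul hhc).abs).integrable_of_hasCompactSupport hsupp
  rw [MeasureTheory.integral_eq_lintegral_of_nonneg_ae
    (Filter.Eventually.of_forall fun z => abs_nonneg _) habsint.aestronglyMeasurable]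
  calc (∫⁻ z : E3, ENNReal.ofReal |f z * g z * h z|).toReal
      ≤ (ENNReal.ofReal (3 * L2 f ^ ((1:ℝ)/2) * L2 (pd 0 f) ^ ((1:ℝ)/2) *
          L2 g ^ ((1:ℝ)/2) * L2 (pd 1 g) ^ ((1:ℝ)/2) * L2 h ^ ((1:ℝ)/2) *
          L2 (pd 2 h) ^ ((1:ℝ)/2))).toReal := ENNReal.toReal_mono ENNReal.ofReal_ne_top hle
    _ = _ := by
        refine ENNReal.toReal_ofReal ?_
        have hnn : ∀ u : E3 → ℝ, 0 ≤ L2 u ^ ((1:ℝ)/2) := fun u => Real.rpow_nonneg (hL2nn u) _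
        have h3nn : (0:ℝ) ≤ 3 := by norm_num
        exact mul_nonneg (mul_nonneg (mul_nonneg (mul_nonneg (mul_nonneg (mul_nonneg h3nn
          (hnn f)) (hnn (pd 0 f))) (hnn g)) (hnn (pd 1 g))) (hnn h)) (hnn (pd 2 h))
end
end

section
/- Let f : [0, T] → [0, ∞) be continuous with f(0) ≤ ε, and suppose there are constants C₀ > 0 and a nonnegative integrable function g on [0,T] such that for all t ∈ [0,T], f(t) + ∫₀ᵗ (C₀ − C f(τ)^{1/2}) g(τ) dτ ≤ f(0). If Cε^{1/2} ≤ C₀/2, then f(t) ≤ ε and ∫₀ᵗ g(τ) dτ ≤ 2ε/C₀ for all t ∈ [0,T]. -/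
/-!
Continuity argument with the margin `4ε`. As long as `f ≤ 4ε`, the smallness condition gives
`C √f ≤ 2 C √ε ≤ C₀`, so the dissipative integral in the energy inequality is nonnegative and
`f t ≤ f 0 ≤ ε`; since `f` is continuous it can therefore never reach `4ε`. Once `f ≤ ε` everywhere,
the coefficient `C₀ - C √f` is at least `C₀ / 2`, which bounds `∫ g` by `2ε / C₀`.
-/

open MeasureTheory Set

theorem ContinuousOn.forall_le_of_bootstrap {f : ℝ → ℝ} {t₀ T a b : ℝ}
    (hf : ContinuousOn f (Icc t₀ T)) (hab : a < b) (h₀ : f t₀ ≤ a)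
    (hstep : ∀ t ∈ Icc t₀ T, (∀ s ∈ Icc t₀ t, f s ≤ b) → f t ≤ a) :
    ∀ t ∈ Icc t₀ T, f t ≤ a := by
  by_contra! ⟨t₁, ht₁, hat₁⟩
  obtain ⟨s, hs, hbs⟩ : ∃ s ∈ Icc t₀ t₁, b < f s := by
    by_contra! hle
    exact hat₁.not_ge (hstep t₁ ht₁ hle)
  have hA : IsCompact (Icc t₀ T ∩ f ⁻¹' Ici b) :=
    isCompact_Icc.of_isClosed_subset
      (hf.preimage_isClosed_of_isClosed isClosed_Icc isClosed_Ici) inter_subset_left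
  obtain ⟨m, ⟨hm, hbm⟩, hmin⟩ := hA.exists_isLeast ⟨s, ⟨hs.1, hs.2.trans ht₁.2⟩, hbs.le⟩
  have hsub : Icc t₀ m ⊆ Icc t₀ T := Icc_subset_Icc_right hm.2
  -- `m` is the first time `f` reaches `b`, so by the intermediate value theorem `f m = b`
  obtain ⟨r, hr, hfr⟩ : b ∈ f '' Icc t₀ m :=
    intermediate_value_Icc hm.1 (hf.mono hsub) ⟨h₀.trans hab.le, hbm⟩
  have hrm : r = m := le_antisymm hr.2 (hmin ⟨hsub hr, hfr.ge⟩)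
  have hbelow : ∀ u ∈ Icc t₀ m, f u ≤ b := by
    intro u hu
    by_contra! hbu
    have hum : u = m := le_antisymm hu.2 (hmin ⟨hsub hu, hbu.le⟩)
    rw [hum, ← hrm, hfr] at hbu
    exact hbu.false
  exact (hstep m hm hbelow).not_gt (hab.trans_le hbm)

theorem mul_sqrt_le_of_le_four_mul {C C₀ ε x : ℝ} (hC : 0 ≤ C)
    (hsmall : C * Real.sqrt ε ≤ C₀ / 2) (hx : x ≤ 4 * ε) : C * Real.sqrt x ≤ C₀ := by
  have hsqrt : Real.sqrt x ≤ 2 * Real.sqrt ε := by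
    calc Real.sqrt x ≤ Real.sqrt (2 ^ 2 * ε) := Real.sqrt_le_sqrt (by linarith)
      _ = 2 * Real.sqrt ε := by rw [Real.sqrt_mul (by positivity), Real.sqrt_sq zero_le_two]
  calc C * Real.sqrt x ≤ C * (2 * Real.sqrt ε) := mul_le_mul_of_nonneg_left hsqrt hC
    _ ≤ C₀ := by linarith

theorem bootstrap_argument_general (T ε C₀ C : ℝ) (hε : 0 < ε)
    (hC₀ : 0 < C₀) (hC : 0 < C) (f g : ℝ → ℝ)
    (hfc : ContinuousOn f (Set.Icc 0 T))
    (hf0 : f 0 ≤ ε)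
    (hfnn : ∀ t ∈ Set.Icc (0:ℝ) T, 0 ≤ f t)
    (hgnn : ∀ t ∈ Set.Icc (0:ℝ) T, 0 ≤ g t)
    (hgint : IntegrableOn g (Set.Icc 0 T) volume)
    (hkey : ∀ t ∈ Set.Icc (0:ℝ) T,
      f t + ∫ τ in (0:ℝ)..t, (C₀ - C * Real.sqrt (f τ)) * g τ ≤ f 0)
    (hsmall : C * Real.sqrt ε ≤ C₀ / 2) :
    ∀ t ∈ Set.Icc (0:ℝ) T, f t ≤ ε ∧ (∫ τ in (0:ℝ)..t, g τ) ≤ 2 * ε / C₀ := by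
  have hfε : ∀ t ∈ Icc 0 T, f t ≤ ε := by
    refine hfc.forall_le_of_bootstrap (by linarith : ε < 4 * ε) hf0 fun t ht hle => ?_
    have hdiss : 0 ≤ ∫ τ in (0:ℝ)..t, (C₀ - C * Real.sqrt (f τ)) * g τ :=
      intervalIntegral.integral_nonneg ht.1 fun τ hτ =>
        mul_nonneg (sub_nonneg.2 (mul_sqrt_le_of_le_four_mul hC.le hsmall (hle τ hτ)))
          (hgnn τ ⟨hτ.1, hτ.2.trans ht.2⟩)
    linarith [hkey t ht]
  intro t ht
  have hsub : Icc 0 t ⊆ Icc 0 T := Icc_subset_Icc_right ht.2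
  have hg : IntegrableOn g (Icc 0 t) := hgint.mono_set hsub
  have hprod : IntegrableOn (fun τ => (C₀ - C * Real.sqrt (f τ)) * g τ) (Icc 0 t) :=
    hg.continuousOn_mul (continuousOn_const.sub
      (continuousOn_const.mul ((hfc.mono hsub).sqrt))) isCompact_Icc
  have hhalf : C₀ / 2 * ∫ τ in (0:ℝ)..t, g τ
      ≤ ∫ τ in (0:ℝ)..t, (C₀ - C * Real.sqrt (f τ)) * g τ := by
    rw [← intervalIntegral.integral_const_mul]
    refine intervalIntegral.integral_mono_on ht.1
      (((intervalIntegrable_iff_integrableOn_Icc_of_le ht.1).2 hg).const_mul _)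
      ((intervalIntegrable_iff_integrableOn_Icc_of_le ht.1).2 hprod) fun τ hτ => ?_
    have hcoef : C * Real.sqrt (f τ) ≤ C₀ / 2 :=
      (mul_le_mul_of_nonneg_left (Real.sqrt_le_sqrt (hfε τ (hsub hτ))) hC.le).trans hsmall
    exact mul_le_mul_of_nonneg_right (by linarith) (hgnn τ (hsub hτ))
  refine ⟨hfε t ht, ?_⟩
  rw [le_div_iff₀ hC₀]
  linarith [hkey t ht, hfnn t ht]

/-- Abstract bootstrap (continuity) argument. -/
theorem bootstrap_argument (T ε C₀ C : ℝ) (hT : 0 < T) (hε : 0 < ε)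
    (hC₀ : 0 < C₀) (hC : 0 < C) (f g : ℝ → ℝ)
    (hfc : ContinuousOn f (Set.Icc 0 T))
    (hf0 : f 0 ≤ ε)
    (hfnn : ∀ t ∈ Set.Icc (0:ℝ) T, 0 ≤ f t)
    (hgnn : ∀ t ∈ Set.Icc (0:ℝ) T, 0 ≤ g t)
    (hgint : IntegrableOn g (Set.Icc 0 T) volume)
    (hkey : ∀ t ∈ Set.Icc (0:ℝ) T,
      f t + ∫ τ in (0:ℝ)..t, (C₀ - C * Real.sqrt (f τ)) * g τ ≤ f 0)
    (hsmall : C * Real.sqrt ε ≤ C₀ / 2) :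
    ∀ t ∈ Set.Icc (0:ℝ) T, f t ≤ ε ∧ (∫ τ in (0:ℝ)..t, g τ) ≤ 2 * ε / C₀ :=
  bootstrap_argument_general T ε C₀ C hε hC₀ hC f g hfc hf0 hfnn hgnn hgint hkey hsmall
end
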